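/- arXiv:1901.00765 — 8 statements merged into one kernel-verified Lean document; each statement's English description precedes it below -/
import Mathlib

section
/- Consider the bi-virus dynamics ẋ¹ = (−D¹ + B¹ − X¹B¹ − X²B¹)x¹, ẋ² = (−D² + B² − X²B² − X¹B²)x², where X^k = diag(x^k), D^k are nonnegative diagonal matrices and B^k are nonnegative matrices. The set D = {(x¹, x²) : x¹ ≥ 0, x² ≥ 0, x¹ + x² ≤ 1 entrywise} is positively invariant: if (x¹(0), x²(0)) ∈ D then (x¹(t), x²(t)) ∈ D for all t ≥ 0. -/
open Matrix

/-- A square matrix is irreducible if for every proper nonempty subset `S` of indices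
there are `i ∈ S` and `j ∉ S` with `M i j ≠ 0`. -/
def MatIrred {n : ℕ} (M : Matrix (Fin n) (Fin n) ℝ) : Prop :=
  ∀ S : Finset (Fin n), S.Nonempty → S ≠ Finset.univ →
    ∃ i ∈ S, ∃ j, j ∉ S ∧ M i j ≠ 0

/-- Spectral abscissa: the largest real part among the (complex) eigenvalues. -/
noncomputable def specAbs {n : ℕ} (M : Matrix (Fin n) (Fin n) ℝ) : ℝ :=
  sSup (Complex.re '' spectrum ℂ (M.map (Complex.ofReal)))

/-- Spectral radius: the largest modulus among the (complex) eigenvalues. -/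
noncomputable def specRad {n : ℕ} (M : Matrix (Fin n) (Fin n) ℝ) : ℝ :=
  sSup ((fun z : ℂ => ‖z‖) '' spectrum ℂ (M.map (Complex.ofReal)))

/-! The penalty `V = Σᵢ ((x¹ᵢ)⁻² + (x²ᵢ)⁻² + ((x¹ᵢ + x²ᵢ - 1)⁺)²)` is `C¹`, vanishes exactly on `D`
and is zero at time `0`. Along the flow, the only terms that could push a coordinate further out
of `D` are the infection terms `(Bᵏ xᵏ)ᵢ`, whose negative parts are bounded by `(Bᵏ (xᵏ)⁻)ᵢ`.
Since the trajectory is bounded on a compact interval `[0, T]`, this gives `V' ≤ K V` there,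
and Grönwall's inequality forces `V = 0` on `[0, T]`. -/

open Finset Set Filter Asymptotics

noncomputable def simplexPenalty (p q : ℝ) : ℝ := p⁻ ^ 2 + q⁻ ^ 2 + (p + q - 1)⁺ ^ 2

lemma abs_posPart_sq_sub_sub_le (y z : ℝ) :
    |z⁺ ^ 2 - y⁺ ^ 2 - (z - y) * (2 * y⁺)| ≤ (z - y) ^ 2 := by
  rcases le_total z 0 with hz | hz <;> rcases le_total y 0 with hy | hy <;>
    simp only [posPart_eq_zero.2, posPart_eq_self.2, hz, hy] <;>
    rw [abs_le] <;> constructor <;> nlinarith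

lemma hasDerivAt_posPart_sq (y : ℝ) : HasDerivAt (fun z : ℝ => z⁺ ^ 2) (2 * y⁺) y := by
  refine .of_isLittleO <| IsBigO.trans_isLittleO ?_ (isLittleO_pow_sub_sub y one_lt_two)
  refine .of_bound 1 (Eventually.of_forall fun z => ?_)
  simpa [Real.norm_eq_abs, sq_abs] using abs_posPart_sq_sub_sub_le y z

lemma HasDerivAt.posPart_sq {f : ℝ → ℝ} {f' t : ℝ} (hf : HasDerivAt f f' t) :
    HasDerivAt (fun s => (f s)⁺ ^ 2) (2 * (f t)⁺ * f') t :=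
  (hasDerivAt_posPart_sq (f t)).comp t hf

lemma HasDerivAt.negPart_sq {f : ℝ → ℝ} {f' t : ℝ} (hf : HasDerivAt f f' t) :
    HasDerivAt (fun s => (f s)⁻ ^ 2) (-(2 * (f t)⁻ * f')) t := by
  simpa [posPart_neg] using hf.neg.posPart_sq

lemma HasDerivAt.simplexPenalty {f g : ℝ → ℝ} {f' g' t : ℝ} (hf : HasDerivAt f f' t)
    (hg : HasDerivAt g g' t) :
    HasDerivAt (fun s => simplexPenalty (f s) (g s))
      (2 * ((f t + g t - 1)⁺ - (f t)⁻) * f' + 2 * ((f t + g t - 1)⁺ - (g t)⁻) * g') t := by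
  refine ((hf.negPart_sq.fun_add hg.negPart_sq).fun_add
    ((hf.fun_add hg).sub_const 1).posPart_sq).congr_deriv ?_
  ring

lemma simplexPenalty_nonneg (p q : ℝ) : 0 ≤ simplexPenalty p q := by
  unfold simplexPenalty; positivity

lemma simplexPenalty_eq_zero_iff {p q : ℝ} :
    simplexPenalty p q = 0 ↔ 0 ≤ p ∧ 0 ≤ q ∧ p + q ≤ 1 := by
  simp only [simplexPenalty, ← negPart_eq_zero, ← sub_nonpos (a := p + q), ← posPart_eq_zero]
  constructor
  · intro h
    refine ⟨?_, ?_, ?_⟩ <;> nlinarith [sq_nonneg p⁻, sq_nonneg q⁻, sq_nonneg (p + q - 1)⁺]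
  · rintro ⟨hp, hq, hpq⟩
    simp [hp, hq, hpq]

-- `s` stands for `(B *ᵥ x⁻) i`, which bounds the infection term `u = (B *ᵥ x) i` from below.
lemma partial_simplexPenalty_mul_rate_le {δ p q u s C : ℝ} (hδ : 0 ≤ δ) (hδC : δ ≤ C)
    (huC : |u| ≤ C) (hpqC : 1 - p - q ≤ C) (hs : 0 ≤ s) (hus : -u ≤ s) :
    2 * ((p + q - 1)⁺ - p⁻) * (-δ * p + (1 - p - q) * u)
      ≤ 4 * C * (p⁻ ^ 2 + (p + q - 1)⁺ ^ 2) + 2 * C * p⁻ * s := by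
  obtain ⟨hu₁, hu₂⟩ := abs_le.1 huC
  have hC : 0 ≤ C := (abs_nonneg u).trans huC
  rcases le_total p 0 with hp | hp <;> rcases le_total (p + q - 1) 0 with hw | hw <;>
    simp only [negPart_eq_neg.2, negPart_eq_zero.2, posPart_eq_zero.2, posPart_eq_self.2,
      hp, hw]
  · have hm : 0 ≤ -p * (1 - p - q) := mul_nonneg (neg_nonneg.2 hp) (by linarith)
    nlinarith [mul_le_mul_of_nonneg_left hus hm, mul_nonneg hδ (sq_nonneg p),
      mul_le_mul_of_nonneg_left hpqC (mul_nonneg (neg_nonneg.2 hp) hs)]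
  · nlinarith [mul_nonneg hδ (sq_nonneg (p + (p + q - 1))), mul_nonneg hδ (sq_nonneg p),
      mul_nonneg (sub_nonneg.2 hδC) (add_nonneg (sq_nonneg p) (sq_nonneg (p + q - 1))),
      mul_nonneg (mul_nonneg (neg_nonneg.2 hp) hw) (sub_nonneg.2 hu₂),
      mul_nonneg (sq_nonneg (p + q - 1)) (neg_nonneg.2 (sub_nonpos.2 hu₁)),
      mul_nonneg hC (sq_nonneg (p + (p + q - 1))), mul_nonneg hC (sq_nonneg p),
      mul_nonneg (mul_nonneg hC (neg_nonneg.2 hp)) hs]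
  · simp
  · nlinarith [mul_nonneg (mul_nonneg hδ hp) hw, mul_nonneg hC (sq_nonneg (p + q - 1)),
      mul_nonneg (sq_nonneg (p + q - 1)) (sub_nonneg.2 hu₁)]

section NonnegMatrix

variable {ι : Type*} [Fintype ι] {B : Matrix ι ι ℝ}

lemma mulVec_negPart_nonneg (hB : ∀ i j, 0 ≤ B i j) (x : ι → ℝ) (i : ι) : 0 ≤ (B *ᵥ x⁻) i :=
  sum_nonneg fun j _ => mul_nonneg (hB i j) (negPart_nonneg _)

lemma neg_mulVec_le_mulVec_negPart (hB : ∀ i j, 0 ≤ B i j) (x : ι → ℝ) (i : ι) :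
    -(B *ᵥ x) i ≤ (B *ᵥ x⁻) i := by
  simp only [mulVec, dotProduct, ← sum_neg_distrib, ← mul_neg, Pi.negPart_apply]
  exact sum_le_sum fun j _ => mul_le_mul_of_nonneg_left (neg_le_negPart _) (hB i j)

lemma dotProduct_mulVec_le_of_nonneg (hB : ∀ i j, 0 ≤ B i j) (a : ι → ℝ) :
    a ⬝ᵥ (B *ᵥ a) ≤ (∑ i, ∑ j, B i j) * (a ⬝ᵥ a) := by
  have hsq : ∀ i, a i * a i ≤ a ⬝ᵥ a := fun i =>
    single_le_sum (f := fun k => a k * a k) (fun k _ => mul_self_nonneg (a k)) (mem_univ i)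
  calc a ⬝ᵥ (B *ᵥ a) = ∑ i, ∑ j, a i * (B i j * a j) := by
        simp only [dotProduct, mulVec, mul_sum]
    _ ≤ ∑ i, ∑ j, B i j * (a ⬝ᵥ a) := by
      refine sum_le_sum fun i _ => sum_le_sum fun j _ => ?_
      nlinarith [mul_le_mul_of_nonneg_left (hsq i) (hB i j),
        mul_le_mul_of_nonneg_left (hsq j) (hB i j), mul_nonneg (hB i j) (sq_nonneg (a i - a j))]
    _ = (∑ i, ∑ j, B i j) * (a ⬝ᵥ a) := by simp only [sum_mul]

end NonnegMatrix

lemma sum_simplexPenalty_rate_le {ι : Type*} [Fintype ι] {δ₁ δ₂ : ι → ℝ}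
    {B₁ B₂ : Matrix ι ι ℝ} (hδ₁ : ∀ i, 0 ≤ δ₁ i) (hδ₂ : ∀ i, 0 ≤ δ₂ i)
    (hB₁ : ∀ i j, 0 ≤ B₁ i j) (hB₂ : ∀ i j, 0 ≤ B₂ i j) {p q : ι → ℝ} {C : ℝ} (hC₀ : 0 ≤ C)
    (hC : ∀ i, δ₁ i + δ₂ i + |(B₁ *ᵥ p) i| + |(B₂ *ᵥ q) i| + |1 - p i - q i| ≤ C) :
    ∑ i, (2 * ((p i + q i - 1)⁺ - (p i)⁻) * (-δ₁ i * p i + (1 - p i - q i) * (B₁ *ᵥ p) i)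
        + 2 * ((p i + q i - 1)⁺ - (q i)⁻) * (-δ₂ i * q i + (1 - q i - p i) * (B₂ *ᵥ q) i))
      ≤ 2 * C * (4 + ∑ i, ∑ j, B₁ i j + ∑ i, ∑ j, B₂ i j) * ∑ i, simplexPenalty (p i) (q i) := by
  set V := ∑ i, simplexPenalty (p i) (q i)
  set β₁ := ∑ i, ∑ j, B₁ i j
  set β₂ := ∑ i, ∑ j, B₂ i j
  have hC' : ∀ i, δ₁ i ≤ C ∧ δ₂ i ≤ C ∧ |(B₁ *ᵥ p) i| ≤ C ∧ |(B₂ *ᵥ q) i| ≤ C ∧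
      1 - p i - q i ≤ C := fun i => by
    refine ⟨?_, ?_, ?_, ?_, ?_⟩ <;>
      linarith [hC i, hδ₁ i, hδ₂ i, abs_nonneg ((B₁ *ᵥ p) i), abs_nonneg ((B₂ *ᵥ q) i),
        abs_nonneg (1 - p i - q i), le_abs_self (1 - p i - q i)]
  have h₁ : ∀ i,
      2 * ((p i + q i - 1)⁺ - (p i)⁻) * (-δ₁ i * p i + (1 - p i - q i) * (B₁ *ᵥ p) i)
        ≤ 4 * C * ((p i)⁻ ^ 2 + (p i + q i - 1)⁺ ^ 2) + 2 * C * (p i)⁻ * (B₁ *ᵥ p⁻) i :=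
    fun i => partial_simplexPenalty_mul_rate_le (hδ₁ i) (hC' i).1 (hC' i).2.2.1 (hC' i).2.2.2.2
      (mulVec_negPart_nonneg hB₁ p i) (neg_mulVec_le_mulVec_negPart hB₁ p i)
  have h₂ : ∀ i,
      2 * ((p i + q i - 1)⁺ - (q i)⁻) * (-δ₂ i * q i + (1 - q i - p i) * (B₂ *ᵥ q) i)
        ≤ 4 * C * ((q i)⁻ ^ 2 + (p i + q i - 1)⁺ ^ 2) + 2 * C * (q i)⁻ * (B₂ *ᵥ q⁻) i :=
    fun i => by
      rw [add_comm (p i)]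
      exact partial_simplexPenalty_mul_rate_le (hδ₂ i) (hC' i).2.1 (hC' i).2.2.2.1
        (by linarith [(hC' i).2.2.2.2]) (mulVec_negPart_nonneg hB₂ q i)
        (neg_mulVec_le_mulVec_negPart hB₂ q i)
  have hp : p⁻ ⬝ᵥ p⁻ ≤ V := sum_le_sum fun i _ => by
    simp only [simplexPenalty, Pi.negPart_apply]
    nlinarith [sq_nonneg (q i)⁻, sq_nonneg (p i + q i - 1)⁺]
  have hq : q⁻ ⬝ᵥ q⁻ ≤ V := sum_le_sum fun i _ => by
    simp only [simplexPenalty, Pi.negPart_apply]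
    nlinarith [sq_nonneg (p i)⁻, sq_nonneg (p i + q i - 1)⁺]
  have hβ₁ : 0 ≤ β₁ := sum_nonneg fun i _ => sum_nonneg fun j _ => hB₁ i j
  have hβ₂ : 0 ≤ β₂ := sum_nonneg fun i _ => sum_nonneg fun j _ => hB₂ i j
  calc _ ≤ ∑ i, (8 * C * simplexPenalty (p i) (q i)
          + 2 * C * ((p i)⁻ * (B₁ *ᵥ p⁻) i + (q i)⁻ * (B₂ *ᵥ q⁻) i)) :=
        sum_le_sum fun i _ => by
          unfold simplexPenalty
          nlinarith [h₁ i, h₂ i, mul_nonneg hC₀ (sq_nonneg (p i)⁻),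
            mul_nonneg hC₀ (sq_nonneg (q i)⁻)]
    _ = 8 * C * V + 2 * C * (p⁻ ⬝ᵥ (B₁ *ᵥ p⁻) + q⁻ ⬝ᵥ (B₂ *ᵥ q⁻)) := by
        simp only [V, dotProduct, Pi.negPart_apply, sum_add_distrib, mul_sum, mul_add]
    _ ≤ 8 * C * V + 2 * C * (β₁ * (p⁻ ⬝ᵥ p⁻) + β₂ * (q⁻ ⬝ᵥ q⁻)) := by
        gcongr
        · exact dotProduct_mulVec_le_of_nonneg hB₁ _
        · exact dotProduct_mulVec_le_of_nonneg hB₂ _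
    _ ≤ 8 * C * V + 2 * C * (β₁ * V + β₂ * V) := by gcongr
    _ = 2 * C * (4 + β₁ + β₂) * V := by ring

lemma nonpos_of_deriv_le_mul {V V' : ℝ → ℝ} {K a b : ℝ} (hV : ContinuousOn V (Icc a b))
    (hV' : ∀ t ∈ Ico a b, HasDerivWithinAt V (V' t) (Ici t) t) (ha : V a ≤ 0)
    (hle : ∀ t ∈ Ico a b, V' t ≤ K * V t) : ∀ t ∈ Icc a b, V t ≤ 0 := fun t ht => by
  simpa [gronwallBound_ε0_δ0] using le_gronwallBound_of_liminf_deriv_right_le hV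
    (fun x hx _ hr => (hV' x hx).liminf_right_slope_le hr) ha
    (fun x hx => (hle x hx).trans_eq (add_zero _).symm) t ht

theorem stmt4 {n : ℕ} (δ1 δ2 : Fin n → ℝ) (B1 B2 : Matrix (Fin n) (Fin n) ℝ)
    (hδ1 : ∀ i, 0 ≤ δ1 i) (hδ2 : ∀ i, 0 ≤ δ2 i)
    (hB1 : ∀ i j, 0 ≤ B1 i j) (hB2 : ∀ i j, 0 ≤ B2 i j)
    (x1 x2 : ℝ → Fin n → ℝ)
    (hode1 : ∀ t i, HasDerivAt (fun s => x1 s i)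
      (-δ1 i * x1 t i + (1 - x1 t i - x2 t i) * ∑ j, B1 i j * x1 t j) t)
    (hode2 : ∀ t i, HasDerivAt (fun s => x2 s i)
      (-δ2 i * x2 t i + (1 - x2 t i - x1 t i) * ∑ j, B2 i j * x2 t j) t)
    (h0 : ∀ i, 0 ≤ x1 0 i ∧ 0 ≤ x2 0 i ∧ x1 0 i + x2 0 i ≤ 1) :
    ∀ t, 0 ≤ t → ∀ i, 0 ≤ x1 t i ∧ 0 ≤ x2 t i ∧ x1 t i + x2 t i ≤ 1 := by
  intro T hT
  have hx1 : Continuous x1 :=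
    continuous_pi fun i => continuous_iff_continuousAt.2 fun t => (hode1 t i).continuousAt
  have hx2 : Continuous x2 :=
    continuous_pi fun i => continuous_iff_continuousAt.2 fun t => (hode2 t i).continuousAt
  obtain ⟨C, hC⟩ := isCompact_Icc.exists_bound_of_continuousOn (s := Icc 0 T)
    (f := fun t i => δ1 i + δ2 i + |(B1 *ᵥ x1 t) i| + |(B2 *ᵥ x2 t) i| + |1 - x1 t i - x2 t i|)
    (by fun_prop)
  have hV : ∀ t, HasDerivAt (fun s => ∑ i, simplexPenalty (x1 s i) (x2 s i)) _ t := fun t =>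
    HasDerivAt.fun_sum fun i _ => (hode1 t i).simplexPenalty (hode2 t i)
  have hVT : ∑ i, simplexPenalty (x1 T i) (x2 T i) ≤ 0 := by
    refine nonpos_of_deriv_le_mul (K := 2 * C * (4 + ∑ i, ∑ j, B1 i j + ∑ i, ∑ j, B2 i j))
      (fun t _ => (hV t).continuousAt.continuousWithinAt) (fun t _ => (hV t).hasDerivWithinAt) ?_
      (fun t ht => ?_) T ⟨hT, le_rfl⟩
    · simp [simplexPenalty_eq_zero_iff.2 (h0 _)]
    · have hCt := hC t (Ico_subset_Icc_self ht)
      exact sum_simplexPenalty_rate_le hδ1 hδ2 hB1 hB2 ((norm_nonneg _).trans hCt)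
        fun i => (le_abs_self _).trans ((norm_le_pi_norm _ i).trans hCt)
  have hzero := (sum_eq_zero_iff_of_nonneg fun i _ => simplexPenalty_nonneg _ _).1
    (hVT.antisymm (sum_nonneg fun i _ => simplexPenalty_nonneg _ _))
  exact fun i => simplexPenalty_eq_zero_iff.1 (hzero i (mem_univ i))
end

section
/- Consider the single-virus SIS dynamics ẋ = (−D + B − XB)x with X = diag(x), D a nonnegative diagonal matrix and B an irreducible nonnegative matrix. Any nonzero equilibrium x* ∈ [0,1]^n (i.e., a vector satisfying (−D + B − X*B)x* = 0 with x* ≥ 0, x* ≠ 0) satisfies x* ≫ 0, i.e., every entry of x* is strictly positive. -/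
open Matrix

/-! Row `i` of the equilibrium equation reads `(1 - xᵢ) (B x)ᵢ = δᵢ xᵢ`. If `xᵢ = 0` this gives
`(B x)ᵢ = 0`, a sum of nonnegative terms, so `xⱼ = 0` whenever `Bᵢⱼ ≠ 0`; irreducibility spreads
the zero to every node, contradicting `x ≠ 0`. -/

theorem MatIrred.forall_of_propagates {n : ℕ} {M : Matrix (Fin n) (Fin n) ℝ}
    (hM : MatIrred M) {p : Fin n → Prop} (hp : ∃ i, p i)
    (hstep : ∀ i j, p i → M i j ≠ 0 → p j) : ∀ i, p i := by
  classical
  by_contra! hnot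
  obtain ⟨i, hiS, j, hjS, hij⟩ :=
    hM (Finset.univ.filter p) (by simpa [Finset.filter_nonempty_iff] using hp)
      (by simpa [Finset.filter_eq_self] using hnot)
  simp only [Finset.mem_filter, Finset.mem_univ, true_and] at hiS hjS
  exact hjS (hstep i j hiS hij)

theorem sis_mulVec_apply {ι R : Type*} [Fintype ι] [DecidableEq ι] [CommRing R]
    (δ x : ι → R) (B : Matrix ι ι R) (i : ι) :
    ((-diagonal δ + B - diagonal x * B) *ᵥ x) i = (1 - x i) * (B *ᵥ x) i - δ i * x i := by
  simp only [sub_mulVec, add_mulVec, neg_mulVec, ← mulVec_mulVec, mulVec_diagonal,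
    Pi.sub_apply, Pi.add_apply, Pi.neg_apply]
  ring

theorem eq_zero_or_eq_zero_of_mulVec_apply_eq_zero {ι R : Type*} [Fintype ι] [Semiring R]
    [PartialOrder R] [IsOrderedRing R] [NoZeroDivisors R] {B : Matrix ι ι R} {x : ι → R}
    (hB : ∀ i j, 0 ≤ B i j) (hx : ∀ i, 0 ≤ x i) {i : ι} (h : (B *ᵥ x) i = 0) (j : ι) :
    B i j = 0 ∨ x j = 0 :=
  mul_eq_zero.mp <| (Finset.sum_eq_zero_iff_of_nonneg fun k _ => mul_nonneg (hB i k) (hx k)).mp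
    h j (Finset.mem_univ j)

theorem stmt5_general {n : ℕ} (δ : Fin n → ℝ) (B : Matrix (Fin n) (Fin n) ℝ)
    (hB : ∀ i j, 0 ≤ B i j) (hirr : MatIrred B)
    (x : Fin n → ℝ) (hx0 : ∀ i, 0 ≤ x i) (hxne : x ≠ 0)
    (heq : (-(Matrix.diagonal δ) + B - Matrix.diagonal x * B).mulVec x = 0) :
    ∀ i, 0 < x i := by
  by_contra! hzero
  have hzero : ∃ i, x i = 0 := hzero.imp fun i hi => le_antisymm hi (hx0 i)
  have hspread : ∀ i j, x i = 0 → B i j ≠ 0 → x j = 0 := by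
    intro i j hi hij
    have hrow := congrFun heq i
    rw [sis_mulVec_apply, hi] at hrow
    exact (eq_zero_or_eq_zero_of_mulVec_apply_eq_zero hB hx0 (by simpa using hrow) j).resolve_left
      hij
  exact hxne (funext (hirr.forall_of_propagates hzero hspread))

theorem stmt5 {n : ℕ} (hn : 1 < n) (δ : Fin n → ℝ) (B : Matrix (Fin n) (Fin n) ℝ)
    (hδ : ∀ i, 0 ≤ δ i) (hB : ∀ i j, 0 ≤ B i j) (hirr : MatIrred B)
    (x : Fin n → ℝ) (hx0 : ∀ i, 0 ≤ x i) (hx1 : ∀ i, x i ≤ 1) (hxne : x ≠ 0)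
    (heq : (-(Matrix.diagonal δ) + B - Matrix.diagonal x * B).mulVec x = 0) :
    ∀ i, 0 < x i :=
  stmt5_general δ B hB hirr x hx0 hxne heq
end

section
/- Let D be a nonnegative diagonal n×n matrix and B an irreducible nonnegative n×n matrix with s(−D + B) > 0. Then the strictly positive equilibrium of the single-virus SIS model is unique: if x, y ∈ (0,1]^n both satisfy (−D + B − diag(x)B)x = 0 and (−D + B − diag(y)B)y = 0, then x = y. -/
/-
At a positive equilibrium, `(1 - x i) (B x) i = δ i x i`. If `κ = max_i x i / y i` were `> 1`,
attained at `i`, then `B x ≤ κ B y` gives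
`κ (1 - y i) (B y) i = κ δ i y i = δ i x i = (1 - x i) (B x) i ≤ κ (1 - x i) (B y) i`,
so `x i ≤ y i`, i.e. `κ ≤ 1`. Hence `x ≤ y`, and `y ≤ x` by symmetry. Positivity of `B y` comes
from irreducibility (every row of `B` has a positive entry), or from `s(-D + B) > 0` when `n = 1`.
-/

open Matrix

namespace Matrix

variable {ι : Type*} [Fintype ι] {B : Matrix ι ι ℝ}

lemma mulVec_apply_le_mulVec_apply (hB : ∀ i j, 0 ≤ B i j) {u v : ι → ℝ} (huv : u ≤ v) (i : ι) :
    (B *ᵥ u) i ≤ (B *ᵥ v) i :=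
  dotProduct_le_dotProduct_of_nonneg_left huv (hB i)

lemma mulVec_apply_pos (hB : ∀ i j, 0 ≤ B i j) {i : ι} (hrow : ∃ j, 0 < B i j) {v : ι → ℝ}
    (hv : ∀ j, 0 < v j) : 0 < (B *ᵥ v) i := by
  obtain ⟨j, hj⟩ := hrow
  exact Finset.sum_pos' (fun k _ => mul_nonneg (hB i k) (hv k).le)
    ⟨j, Finset.mem_univ j, mul_pos hj (hv j)⟩

end Matrix

lemma MatIrred.exists_pos_of_one_lt {n : ℕ} {B : Matrix (Fin n) (Fin n) ℝ} (hirr : MatIrred B)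
    (hB : ∀ i j, 0 ≤ B i j) (hn : 1 < n) (i : Fin n) : ∃ j, 0 < B i j := by
  have hproper : ({i} : Finset (Fin n)) ≠ Finset.univ := by
    intro h
    have := congrArg Finset.card h
    simp only [Finset.card_singleton, Finset.card_univ, Fintype.card_fin] at this
    omega
  obtain ⟨i', hi', j, -, hij⟩ := hirr {i} (Finset.singleton_nonempty i) hproper
  rw [Finset.mem_singleton.mp hi'] at hij
  exact ⟨j, (hB i j).lt_of_ne' hij⟩

lemma spectrum_map_ofReal_fin_one (M : Matrix (Fin 1) (Fin 1) ℝ) :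
    spectrum ℂ (M.map Complex.ofReal) = {(M 0 0 : ℂ)} := by
  ext z
  rw [spectrum.mem_iff, Set.mem_singleton_iff, Matrix.isUnit_iff_isUnit_det, Matrix.det_fin_one]
  simp [Matrix.algebraMap_matrix_apply, isUnit_iff_ne_zero, sub_eq_zero]

lemma specAbs_fin_one (M : Matrix (Fin 1) (Fin 1) ℝ) : specAbs M = M 0 0 := by
  simp [specAbs, spectrum_map_ofReal_fin_one]

lemma exists_pos_entry_of_specAbs_pos {n : ℕ} {δ : Fin n → ℝ} {B : Matrix (Fin n) (Fin n) ℝ}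
    (hδ : ∀ i, 0 ≤ δ i) (hB : ∀ i j, 0 ≤ B i j) (hirr : MatIrred B)
    (hs : 0 < specAbs (-(diagonal δ) + B)) (i : Fin n) : ∃ j, 0 < B i j := by
  rcases (Nat.one_le_iff_ne_zero.mpr (Fin.pos i).ne').lt_or_eq with hn | rfl
  · exact hirr.exists_pos_of_one_lt hB hn i
  · rw [specAbs_fin_one] at hs
    simp only [Matrix.add_apply, Matrix.neg_apply, diagonal_apply_eq] at hs
    obtain rfl := Subsingleton.elim i 0
    exact ⟨0, by linarith [hδ 0]⟩

def IsSISEquilibrium {ι : Type*} [Fintype ι] (δ : ι → ℝ) (B : Matrix ι ι ℝ) (x : ι → ℝ) : Prop :=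
  ∀ i, (1 - x i) * (B *ᵥ x) i = δ i * x i

namespace IsSISEquilibrium

variable {ι : Type*} [Fintype ι] {δ : ι → ℝ} {B : Matrix ι ι ℝ} {x y : ι → ℝ}

lemma of_mulVec_eq_zero [DecidableEq ι]
    (h : (-(diagonal δ) + B - diagonal x * B) *ᵥ x = 0) : IsSISEquilibrium δ B x := by
  intro i
  have hi := congrFun h i
  simp only [sub_mulVec, add_mulVec, neg_mulVec, ← mulVec_mulVec, mulVec_diagonal,
    Pi.sub_apply, Pi.add_apply, Pi.neg_apply, Pi.zero_apply] at hi
  linarith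

lemma apply_le_of_eq_smul_apply (hx : IsSISEquilibrium δ B x) (hy : IsSISEquilibrium δ B y)
    (hB : ∀ i j, 0 ≤ B i j) {κ : ℝ} (hκ : 0 < κ) (hxy : x ≤ κ • y) {i : ι}
    (hi : x i = κ * y i) (hx1 : x i ≤ 1) (hBy : 0 < (B *ᵥ y) i) : x i ≤ y i := by
  have hBxy : (B *ᵥ x) i ≤ κ * (B *ᵥ y) i := by
    simpa [mulVec_smul] using mulVec_apply_le_mulVec_apply hB hxy i
  have key : κ * (B *ᵥ y) i * (1 - y i) ≤ κ * (B *ᵥ y) i * (1 - x i) :=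
    calc κ * (B *ᵥ y) i * (1 - y i) = κ * (δ i * y i) := by rw [← hy i]; ring
      _ = (1 - x i) * (B *ᵥ x) i := by rw [hx i, hi]; ring
      _ ≤ (1 - x i) * (κ * (B *ᵥ y) i) := mul_le_mul_of_nonneg_left hBxy (by linarith)
      _ = κ * (B *ᵥ y) i * (1 - x i) := by ring
  linarith [le_of_mul_le_mul_left key (mul_pos hκ hBy)]

lemma le (hx : IsSISEquilibrium δ B x) (hy : IsSISEquilibrium δ B y) (hB : ∀ i j, 0 ≤ B i j)
    (hx1 : ∀ i, x i ≤ 1) (hy0 : ∀ i, 0 < y i) (hBy : ∀ i, 0 < (B *ᵥ y) i) : x ≤ y := by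
  cases isEmpty_or_nonempty ι
  · exact fun i => isEmptyElim i
  obtain ⟨i, hmax⟩ := Finite.exists_max fun j => x j / y j
  set κ := x i / y i
  have hxy : x ≤ κ • y := fun j => by
    simpa [div_le_iff₀ (hy0 j)] using hmax j
  have hκ : κ ≤ 1 := by
    by_contra! hκ
    have hi : x i = κ * y i := by rw [div_mul_cancel₀ _ (hy0 i).ne']
    have := hx.apply_le_of_eq_smul_apply hy hB (by linarith) hxy hi (hx1 i) (hBy i)
    exact hκ.not_ge ((div_le_one (hy0 i)).mpr this)
  exact fun j => (hxy j).trans (by simpa using mul_le_of_le_one_left (hy0 j).le hκ)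

end IsSISEquilibrium

theorem stmt9 {n : ℕ} (δ : Fin n → ℝ) (B : Matrix (Fin n) (Fin n) ℝ)
    (hδ : ∀ i, 0 ≤ δ i) (hB : ∀ i j, 0 ≤ B i j) (hirr : MatIrred B)
    (hs : 0 < specAbs (-(Matrix.diagonal δ) + B))
    (x y : Fin n → ℝ)
    (hx : ∀ i, 0 < x i ∧ x i ≤ 1) (hy : ∀ i, 0 < y i ∧ y i ≤ 1)
    (heqx : (-(Matrix.diagonal δ) + B - Matrix.diagonal x * B).mulVec x = 0)
    (heqy : (-(Matrix.diagonal δ) + B - Matrix.diagonal y * B).mulVec y = 0) :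
    x = y := by
  have hrow := exists_pos_entry_of_specAbs_pos hδ hB hirr hs
  have hBx : ∀ i, 0 < (B *ᵥ x) i := fun i => mulVec_apply_pos hB (hrow i) fun j => (hx j).1
  have hBy : ∀ i, 0 < (B *ᵥ y) i := fun i => mulVec_apply_pos hB (hrow i) fun j => (hy j).1
  have hX := IsSISEquilibrium.of_mulVec_eq_zero heqx
  have hY := IsSISEquilibrium.of_mulVec_eq_zero heqy
  exact le_antisymm (hX.le hY hB (fun i => (hx i).2) (fun i => (hy i).1) hBy)
    (hY.le hX hB (fun i => (hy i).2) (fun i => (hx i).1) hBx)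
end

section
/- Consider the bi-virus model ẋ¹ = (−D¹ + B¹ − X¹B¹ − X²B¹)x¹, ẋ² = (−D² + B² − X²B² − X¹B²)x², with D^k nonnegative diagonal and B^k irreducible nonnegative. If (x̃¹, x̃²) is an equilibrium lying in D = {x¹, x² ≥ 0, x¹ + x² ≤ 1}, then x̃¹ + x̃² ≪ 1, i.e., x̃¹_i + x̃²_i < 1 for every i. -/
/-!
At a node `i` with `x¹ᵢ + x²ᵢ = 1` the infection factor `1 - x¹ᵢ - x²ᵢ` vanishes in both
equilibrium equations, which then reduce to `δᵏᵢ xᵏᵢ = 0`. Since `δᵏᵢ > 0`, both `x¹ᵢ` and `x²ᵢ`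
vanish, contradicting `x¹ᵢ + x²ᵢ = 1`.
-/

open Matrix

section BiVirus

variable {ι R : Type*} [Fintype ι] [DecidableEq ι] [CommRing R]

theorem biVirus_mulVec_apply (δ x y : ι → R) (B : Matrix ι ι R) (i : ι) :
    ((-diagonal δ + B - diagonal x * B - diagonal y * B) *ᵥ x) i
      = -δ i * x i + (1 - x i - y i) * (B *ᵥ x) i := by
  simp only [sub_mulVec, add_mulVec, neg_mulVec, ← mulVec_mulVec, mulVec_diagonal,
    Pi.sub_apply, Pi.add_apply, Pi.neg_apply]
  ring

theorem eq_zero_of_biVirus_equilibrium_of_saturated [NoZeroDivisors R]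
    {δ x y : ι → R} {B : Matrix ι ι R} {i : ι}
    (heq : (-diagonal δ + B - diagonal x * B - diagonal y * B) *ᵥ x = 0)
    (hδ : δ i ≠ 0) (hsat : x i + y i = 1) : x i = 0 := by
  have hi := congrFun heq i
  rw [biVirus_mulVec_apply, show 1 - x i - y i = 0 by rw [sub_sub, hsat, sub_self]] at hi
  simpa [hδ] using hi

end BiVirus

theorem stmt10_general {n : ℕ} (δ1 δ2 : Fin n → ℝ) (B1 B2 : Matrix (Fin n) (Fin n) ℝ)
    (hδ1 : ∀ i, 0 < δ1 i) (hδ2 : ∀ i, 0 < δ2 i)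
    (x1 x2 : Fin n → ℝ)
    (hx : ∀ i, 0 ≤ x1 i ∧ 0 ≤ x2 i ∧ x1 i + x2 i ≤ 1)
    (heq1 : (-(Matrix.diagonal δ1) + B1 - Matrix.diagonal x1 * B1
      - Matrix.diagonal x2 * B1).mulVec x1 = 0)
    (heq2 : (-(Matrix.diagonal δ2) + B2 - Matrix.diagonal x2 * B2
      - Matrix.diagonal x1 * B2).mulVec x2 = 0) :
    ∀ i, x1 i + x2 i < 1 := by
  intro i
  by_contra! hge
  have hsat : x1 i + x2 i = 1 := le_antisymm (hx i).2.2 hge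
  have hx1 : x1 i = 0 :=
    eq_zero_of_biVirus_equilibrium_of_saturated heq1 (hδ1 i).ne' hsat
  have hx2 : x2 i = 0 :=
    eq_zero_of_biVirus_equilibrium_of_saturated heq2 (hδ2 i).ne' (by rwa [add_comm])
  rw [hx1, hx2] at hsat
  norm_num at hsat

theorem stmt10 {n : ℕ} (δ1 δ2 : Fin n → ℝ) (B1 B2 : Matrix (Fin n) (Fin n) ℝ)
    (hδ1 : ∀ i, 0 < δ1 i) (hδ2 : ∀ i, 0 < δ2 i)
    (hB1 : ∀ i j, 0 ≤ B1 i j) (hB2 : ∀ i j, 0 ≤ B2 i j)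
    (hirr1 : MatIrred B1) (hirr2 : MatIrred B2)
    (x1 x2 : Fin n → ℝ)
    (hx : ∀ i, 0 ≤ x1 i ∧ 0 ≤ x2 i ∧ x1 i + x2 i ≤ 1)
    (heq1 : (-(Matrix.diagonal δ1) + B1 - Matrix.diagonal x1 * B1
      - Matrix.diagonal x2 * B1).mulVec x1 = 0)
    (heq2 : (-(Matrix.diagonal δ2) + B2 - Matrix.diagonal x2 * B2
      - Matrix.diagonal x1 * B2).mulVec x2 = 0) :
    ∀ i, x1 i + x2 i < 1 :=
  stmt10_general δ1 δ2 B1 B2 hδ1 hδ2 x1 x2 hx heq1 heq2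
end

section
/- Suppose two homogeneous viruses spread over the same strongly connected directed graph with adjacency matrix A (irreducible, nonnegative, with positive diagonal), with parameters δ¹, β¹, δ², β² > 0, so that equilibria satisfy (I − X̃¹ − X̃²)A x̃¹ = (δ¹/β¹) x̃¹ and (I − X̃¹ − X̃²)A x̃² = (δ²/β²) x̃². If there exists an equilibrium with x̃¹ > 0 and x̃² > 0 (both nonzero, nonnegative) and x̃¹ + x̃² ≪ 1, then δ¹/β¹ = δ²/β². -/
open Matrix

/-!
The equilibrium equations say that `x1` and `x2` are nonnegative nonzero eigenvectors of the
nonnegative irreducible matrix `diag (1 - x1 - x2) * A`. Irreducibility forces both to be strictly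
positive, and two strictly positive eigenvectors of a nonnegative matrix share their eigenvalue.
-/

/-- The zero set of `y` is closed under the edges of `M`, so by irreducibility it is empty or
everything. -/
lemma MatIrred.eq_zero_or_pos {n : ℕ} {M : Matrix (Fin n) (Fin n) ℝ}
    (hM : ∀ i j, 0 ≤ M i j) (hirr : MatIrred M) {y : Fin n → ℝ} (hy : ∀ i, 0 ≤ y i)
    (hzero : ∀ i, y i = 0 → (M *ᵥ y) i ≤ 0) : y = 0 ∨ ∀ i, 0 < y i := by
  classical
  by_contra! h
  obtain ⟨hy0, i₀, hi₀⟩ := h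
  set S := Finset.univ.filter (fun i => y i = 0)
  have hS : S.Nonempty := ⟨i₀, by simpa [S] using le_antisymm hi₀ (hy i₀)⟩
  have hSuniv : S ≠ Finset.univ := fun h =>
    hy0 (funext fun j => by simpa [S] using (h ▸ Finset.mem_univ j :))
  obtain ⟨i, hiS, j, hjS, hMij⟩ := hirr S hS hSuniv
  have hyi : y i = 0 := by simpa [S] using hiS
  have hyj : 0 < y j := lt_of_le_of_ne (hy j) (by simpa [S, eq_comm] using hjS)
  have : M i j * y j ≤ (M *ᵥ y) i :=
    Finset.single_le_sum (fun k _ => mul_nonneg (hM i k) (hy k)) (Finset.mem_univ j)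
  nlinarith [hzero i hyi, lt_of_le_of_ne (hM i j) (Ne.symm hMij)]

lemma MatIrred.pos_of_mulVec_eq_smul {n : ℕ} {M : Matrix (Fin n) (Fin n) ℝ}
    (hM : ∀ i j, 0 ≤ M i j) (hirr : MatIrred M) {x : Fin n → ℝ} {a : ℝ}
    (hx : ∀ i, 0 ≤ x i) (hx0 : x ≠ 0) (hMx : M *ᵥ x = a • x) : ∀ i, 0 < x i :=
  (hirr.eq_zero_or_pos hM hx fun i hi => by simp [hMx, hi]).resolve_left hx0

lemma MatIrred.diagonal_mul {n : ℕ} {A : Matrix (Fin n) (Fin n) ℝ} (hA : MatIrred A)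
    {d : Fin n → ℝ} (hd : ∀ i, d i ≠ 0) : MatIrred (diagonal d * A) := by
  intro S hS hSuniv
  obtain ⟨i, hiS, j, hjS, hAij⟩ := hA S hS hSuniv
  exact ⟨i, hiS, j, hjS, by simpa [diagonal_mul] using ⟨hd i, hAij⟩⟩

/-- Comparing `x` with the largest multiple `t • y` below it at an index `k` where `t • y` touches
`x`: there `(M *ᵥ (x - t • y)) k = (a - b) * x k` must be nonnegative. -/
lemma le_of_mulVec_eq_smul_of_pos {ι : Type*} [Fintype ι] [Nonempty ι] {M : Matrix ι ι ℝ}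
    (hM : ∀ i j, 0 ≤ M i j) {x y : ι → ℝ} {a b : ℝ} (hx : ∀ i, 0 < x i) (hy : ∀ i, 0 < y i)
    (hMx : M *ᵥ x = a • x) (hMy : M *ᵥ y = b • y) : b ≤ a := by
  obtain ⟨k, -, hk⟩ := Finset.exists_min_image Finset.univ (fun i => x i / y i)
    Finset.univ_nonempty
  set t := x k / y k
  have hz : ∀ i, 0 ≤ (x - t • y) i := fun i => by
    have := (le_div_iff₀ (hy i)).mp (hk i (Finset.mem_univ i))
    simp only [Pi.sub_apply, Pi.smul_apply, smul_eq_mul]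
    linarith
  have htk : t * y k = x k := div_mul_cancel₀ _ (hy k).ne'
  have hMz : (M *ᵥ (x - t • y)) k = (a - b) * x k := by
    simp only [mulVec_sub, mulVec_smul, hMx, hMy, Pi.sub_apply, Pi.smul_apply, smul_eq_mul]
    rw [← mul_assoc, mul_comm t b, mul_assoc, htk]
    ring
  have : 0 ≤ (a - b) * x k :=
    hMz ▸ Finset.sum_nonneg fun j _ => mul_nonneg (hM k j) (hz j)
  nlinarith [hx k]

theorem stmt11_general {n : ℕ} (A : Matrix (Fin n) (Fin n) ℝ)
    (hA : ∀ i j, 0 ≤ A i j) (hirr : MatIrred A)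
    (δ1 β1 δ2 β2 : ℝ)
    (x1 x2 : Fin n → ℝ)
    (hx1 : ∀ i, 0 ≤ x1 i) (hx2 : ∀ i, 0 ≤ x2 i)
    (hx1ne : x1 ≠ 0) (hx2ne : x2 ≠ 0)
    (hsum : ∀ i, x1 i + x2 i < 1)
    (he1 : (((1 : Matrix (Fin n) (Fin n) ℝ) - Matrix.diagonal x1 - Matrix.diagonal x2)
      * A).mulVec x1 = (δ1 / β1) • x1)
    (he2 : (((1 : Matrix (Fin n) (Fin n) ℝ) - Matrix.diagonal x1 - Matrix.diagonal x2)
      * A).mulVec x2 = (δ2 / β2) • x2) :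
    δ1 / β1 = δ2 / β2 := by
  have hd : (1 : Matrix (Fin n) (Fin n) ℝ) - diagonal x1 - diagonal x2
      = diagonal (fun i => 1 - x1 i - x2 i) := by
    rw [← diagonal_one, diagonal_sub, diagonal_sub]
  have hdpos : ∀ i, 0 < 1 - x1 i - x2 i := fun i => by linarith [hsum i]
  rw [hd] at he1 he2
  have hMnn : ∀ i j, 0 ≤ (diagonal (fun i => 1 - x1 i - x2 i) * A) i j := fun i j => by
    simpa [diagonal_mul] using mul_nonneg (hdpos i).le (hA i j)
  have hMirr := hirr.diagonal_mul fun i => (hdpos i).ne'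
  have hp1 := hMirr.pos_of_mulVec_eq_smul hMnn hx1 hx1ne he1
  have hp2 := hMirr.pos_of_mulVec_eq_smul hMnn hx2 hx2ne he2
  have : Nonempty (Fin n) := by
    by_contra h
    exact hx1ne (funext fun i => (h ⟨i⟩).elim)
  exact le_antisymm (le_of_mulVec_eq_smul_of_pos hMnn hp2 hp1 he2 he1)
    (le_of_mulVec_eq_smul_of_pos hMnn hp1 hp2 he1 he2)

theorem stmt11 {n : ℕ} (A : Matrix (Fin n) (Fin n) ℝ)
    (hA : ∀ i j, 0 ≤ A i j) (hirr : MatIrred A) (hdiag : ∀ i, 0 < A i i)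
    (δ1 β1 δ2 β2 : ℝ) (hδ1 : 0 < δ1) (hβ1 : 0 < β1) (hδ2 : 0 < δ2) (hβ2 : 0 < β2)
    (x1 x2 : Fin n → ℝ)
    (hx1 : ∀ i, 0 ≤ x1 i) (hx2 : ∀ i, 0 ≤ x2 i)
    (hx1ne : x1 ≠ 0) (hx2ne : x2 ≠ 0)
    (hsum : ∀ i, x1 i + x2 i < 1)
    (he1 : (((1 : Matrix (Fin n) (Fin n) ℝ) - Matrix.diagonal x1 - Matrix.diagonal x2)
      * A).mulVec x1 = (δ1 / β1) • x1)
    (he2 : (((1 : Matrix (Fin n) (Fin n) ℝ) - Matrix.diagonal x1 - Matrix.diagonal x2)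
      * A).mulVec x2 = (δ2 / β2) • x2) :
    δ1 / β1 = δ2 / β2 :=
  stmt11_general A hA hirr δ1 β1 δ2 β2 x1 x2 hx1 hx2 hx1ne hx2ne hsum he1 he2
end

section
/- Fix α > 0 and consider, for an irreducible nonnegative matrix A with positive diagonal and a constant r = δ¹/β¹ > 0, solutions x ≫ 0 with (1 + 1/α)x ≪ 1 of the equation (A − (1 + 1/α) diag(x) A) x = r x. There is at most one such solution; i.e., for each α > 0 the coexisting parallel equilibrium pair (x̃¹, x̃²) with x̃¹ = α x̃² is unique. -/
open Matrix

/-!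
Solving the equation for `x` gives the fixed-point form `x = T x` with
`(T x)ᵢ = (A x)ᵢ / (r + c (A x)ᵢ)`, `c = 1 + 1/α`. Since `A ≥ 0` and `t ↦ t / (r + c t)` is
increasing, `T` is monotone on positive vectors; since `t ↦ t / (r + c t)` is strictly concave
through the origin, `T (l • x) > l • T x` for `0 < l < 1` wherever `T x > 0`. For two positive
fixed points `x`, `z`, let `l = minᵢ zᵢ / xᵢ`, attained at `k`, so that `l • x ≤ z`. If `l < 1`,
then `z_k = (T z)_k ≥ (T (l • x))_k > l (T x)_k = l x_k = z_k`, which is absurd; hence `x ≤ z`,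
and by symmetry `x = z`.
-/

open Function

section Subhomogeneous

variable {ι : Type*} [Fintype ι] {T : (ι → ℝ) → ι → ℝ}

theorem le_of_isFixedPt_of_strictSubhomogeneous
    (hmono : MonotoneOn T {y | ∀ i, 0 < y i})
    (hsub : ∀ y, (∀ i, 0 < y i) → ∀ l : ℝ, 0 < l → l < 1 →
      ∀ i, 0 < T y i → l * T y i < T (l • y) i)
    {x z : ι → ℝ} (hx : ∀ i, 0 < x i) (hz : ∀ i, 0 < z i)
    (hTx : IsFixedPt T x) (hTz : IsFixedPt T z) : x ≤ z := by
  intro i₀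
  obtain ⟨k, -, hk⟩ := Finset.exists_min_image Finset.univ (fun i => z i / x i)
    ⟨i₀, Finset.mem_univ i₀⟩
  set l := z k / x k
  have hl : 0 < l := div_pos (hz k) (hx k)
  have hlx : l • x ≤ z := fun i => (le_div_iff₀ (hx i)).mp (hk i (Finset.mem_univ i))
  have hlz : l * x k = z k := div_mul_cancel₀ _ (hx k).ne'
  have hone : 1 ≤ l := by
    by_contra! hl1
    have hmono_k : T (l • x) k ≤ T z k :=
      hmono (fun i => mul_pos hl (hx i)) hz hlx k
    have hstrict : l * T x k < T (l • x) k :=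
      hsub x hx l hl hl1 k (by rw [hTx]; exact hx k)
    rw [hTx] at hstrict
    rw [hTz] at hmono_k
    linarith
  calc x i₀ ≤ l * x i₀ := le_mul_of_one_le_left (hx i₀).le hone
    _ ≤ z i₀ := hlx i₀

theorem eq_of_isFixedPt_of_strictSubhomogeneous
    (hmono : MonotoneOn T {y | ∀ i, 0 < y i})
    (hsub : ∀ y, (∀ i, 0 < y i) → ∀ l : ℝ, 0 < l → l < 1 →
      ∀ i, 0 < T y i → l * T y i < T (l • y) i)
    {x z : ι → ℝ} (hx : ∀ i, 0 < x i) (hz : ∀ i, 0 < z i)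
    (hTx : IsFixedPt T x) (hTz : IsFixedPt T z) : x = z :=
  le_antisymm (le_of_isFixedPt_of_strictSubhomogeneous hmono hsub hx hz hTx hTz)
    (le_of_isFixedPt_of_strictSubhomogeneous hmono hsub hz hx hTz hTx)

end Subhomogeneous

section Saturation

variable {r c : ℝ}

theorem div_add_mul_le_div_add_mul (hr : 0 < r) (hc : 0 ≤ c) {s t : ℝ} (hs : 0 ≤ s)
    (hst : s ≤ t) : s / (r + c * s) ≤ t / (r + c * t) := by
  rw [div_le_div_iff₀ (by positivity) (by nlinarith)]
  nlinarith

theorem mul_div_add_mul_lt (hr : 0 < r) (hc : 0 < c) {l t : ℝ} (hl : 0 < l) (hl1 : l < 1)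
    (ht : 0 < t) : l * (t / (r + c * t)) < l * t / (r + c * (l * t)) := by
  rw [← mul_div_assoc, div_lt_div_iff₀ (by positivity) (by positivity)]
  have : 0 < l * t * (c * t * (1 - l)) := by
    have := sub_pos.mpr hl1
    positivity
  nlinarith

end Saturation

section EquilibriumMap

variable {ι : Type*} [Fintype ι] {A : Matrix ι ι ℝ} {r c : ℝ}

noncomputable def equilibriumMap (A : Matrix ι ι ℝ) (r c : ℝ) (y : ι → ℝ) : ι → ℝ :=
  fun i => (A *ᵥ y) i / (r + c * (A *ᵥ y) i)

theorem mulVec_nonneg_of_nonneg (hA : ∀ i j, 0 ≤ A i j) {y : ι → ℝ} (hy : 0 ≤ y) :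
    0 ≤ A *ᵥ y :=
  fun i => dotProduct_nonneg_of_nonneg (hA i) hy

theorem mulVec_mono_of_nonneg (hA : ∀ i j, 0 ≤ A i j) {y z : ι → ℝ} (hyz : y ≤ z) :
    A *ᵥ y ≤ A *ᵥ z :=
  fun i => dotProduct_le_dotProduct_of_nonneg_left hyz (hA i)

theorem isFixedPt_equilibriumMap [DecidableEq ι] (hA : ∀ i j, 0 ≤ A i j) (hr : 0 < r)
    (hc : 0 ≤ c) {y : ι → ℝ} (hy : 0 ≤ y) (heq : (A - c • (diagonal y * A)) *ᵥ y = r • y) :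
    IsFixedPt (equilibriumMap A r c) y := by
  funext i
  have hAy := mulVec_nonneg_of_nonneg hA hy i
  have hi := congrFun heq i
  simp only [sub_mulVec, smul_mulVec, ← mulVec_mulVec, mulVec_diagonal, Pi.sub_apply,
    Pi.smul_apply, smul_eq_mul] at hi
  rw [equilibriumMap, div_eq_iff (add_pos_of_pos_of_nonneg hr (mul_nonneg hc hAy)).ne']
  linarith

theorem monotoneOn_equilibriumMap (hA : ∀ i j, 0 ≤ A i j) (hr : 0 < r) (hc : 0 ≤ c) :
    MonotoneOn (equilibriumMap A r c) {y | ∀ i, 0 < y i} := fun _ hy _ _ hyz i =>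
  div_add_mul_le_div_add_mul hr hc (mulVec_nonneg_of_nonneg hA (fun j => (hy j).le) i)
    (mulVec_mono_of_nonneg hA hyz i)

theorem mul_equilibriumMap_lt (hA : ∀ i j, 0 ≤ A i j) (hr : 0 < r) (hc : 0 < c)
    {y : ι → ℝ} (hy : 0 ≤ y) {l : ℝ} (hl : 0 < l) (hl1 : l < 1) {i : ι}
    (hTy : 0 < equilibriumMap A r c y i) :
    l * equilibriumMap A r c y i < equilibriumMap A r c (l • y) i := by
  have hAy : 0 < (A *ᵥ y) i := (mulVec_nonneg_of_nonneg hA hy i).lt_of_ne fun h => by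
    simp [equilibriumMap, ← h] at hTy
  simpa only [equilibriumMap, mulVec_smul, Pi.smul_apply, smul_eq_mul]
    using mul_div_add_mul_lt hr hc hl hl1 hAy

end EquilibriumMap

theorem stmt13_general {n : ℕ} (A : Matrix (Fin n) (Fin n) ℝ)
    (hA : ∀ i j, 0 ≤ A i j)
    (r α : ℝ) (hr : 0 < r) (hα : 0 < α)
    (x xh : Fin n → ℝ)
    (hx : ∀ i, 0 < x i)
    (hxh : ∀ i, 0 < xh i)
    (heq : (A - (1 + 1 / α) • (Matrix.diagonal x * A)).mulVec x = r • x)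
    (heqh : (A - (1 + 1 / α) • (Matrix.diagonal xh * A)).mulVec xh = r • xh) :
    x = xh := by
  have hc : 0 < 1 + 1 / α := by positivity
  exact eq_of_isFixedPt_of_strictSubhomogeneous (monotoneOn_equilibriumMap hA hr hc.le)
    (fun _ hy _ hl hl1 _ => mul_equilibriumMap_lt hA hr hc (fun i => (hy i).le) hl hl1) hx hxh
    (isFixedPt_equilibriumMap hA hr hc.le (fun i => (hx i).le) heq)
    (isFixedPt_equilibriumMap hA hr hc.le (fun i => (hxh i).le) heqh)

theorem stmt13 {n : ℕ} (A : Matrix (Fin n) (Fin n) ℝ)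
    (hA : ∀ i j, 0 ≤ A i j) (hirr : MatIrred A) (hdiag : ∀ i, 0 < A i i)
    (r α : ℝ) (hr : 0 < r) (hα : 0 < α)
    (x xh : Fin n → ℝ)
    (hx : ∀ i, 0 < x i) (hx1 : ∀ i, (1 + 1 / α) * x i < 1)
    (hxh : ∀ i, 0 < xh i) (hxh1 : ∀ i, (1 + 1 / α) * xh i < 1)
    (heq : (A - (1 + 1 / α) • (Matrix.diagonal x * A)).mulVec x = r • x)
    (heqh : (A - (1 + 1 / α) • (Matrix.diagonal xh * A)).mulVec xh = r • xh) :
    x = xh :=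
  stmt13_general A hA r α hr hα x xh hx hxh heq heqh
end

section
/- Let (x̃¹, x̃²) be a coexisting equilibrium of the homogeneous bi-virus model on a common graph with δ¹/β¹ = δ²/β², and let J be the Jacobian of the bi-virus vector field at (x̃¹, x̃²). Then the vector (x̃¹, −x̃¹) ∈ R^{2n} is in the kernel of J; in particular 0 is an eigenvalue of J. -/
/-! In block row `k` of `J (x̃¹, -x̃¹)` the two `βᵏ diag (A x̃ᵏ)` terms cancel, leaving
`(βᵏ M - δᵏ I) x̃¹` up to sign, with `M = (I - X̃¹ - X̃²) A`. This vanishes because `x̃¹` is an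
eigenvector of `M` for the eigenvalue `δ¹/β¹ = δ²/β²`. -/

open Matrix

theorem Matrix.fromBlocks_mulVec_sumElim_neg {l m n R : Type*} [Fintype l] [Ring R]
    (P Q : Matrix m l R) (S T : Matrix n l R) (v : l → R) :
    fromBlocks P Q S T *ᵥ Sum.elim v (-v) = Sum.elim ((P - Q) *ᵥ v) ((S - T) *ᵥ v) := by
  rw [fromBlocks_mulVec, Sum.elim_comp_inl, Sum.elim_comp_inr, mulVec_neg, mulVec_neg,
    sub_mulVec, sub_mulVec, sub_eq_add_neg, sub_eq_add_neg]

theorem Matrix.smul_sub_smul_one_mulVec_eq_zero {n R : Type*} [Fintype n] [DecidableEq n]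
    [CommRing R] {M : Matrix n n R} {v : n → R} {c β δ : R}
    (hv : M *ᵥ v = c • v) (hδ : β * c = δ) :
    (β • M - δ • (1 : Matrix n n R)) *ᵥ v = 0 := by
  rw [sub_mulVec, smul_mulVec, smul_mulVec, hv, one_mulVec, smul_smul, hδ, sub_self]

theorem stmt18_general {n : ℕ} (A : Matrix (Fin n) (Fin n) ℝ)
    (δ1 β1 δ2 β2 : ℝ) (hβ1 : 0 < β1) (hβ2 : 0 < β2)
    (hratio : δ1 / β1 = δ2 / β2)
    (x1 x2 : Fin n → ℝ)
    (he1 : (((1 : Matrix (Fin n) (Fin n) ℝ) - Matrix.diagonal x1 - Matrix.diagonal x2)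
      * A).mulVec x1 = (δ1 / β1) • x1) :
    (Matrix.fromBlocks
      (β1 • (((1 : Matrix (Fin n) (Fin n) ℝ) - Matrix.diagonal x1 - Matrix.diagonal x2) * A)
        - δ1 • (1 : Matrix (Fin n) (Fin n) ℝ) - β1 • Matrix.diagonal (A.mulVec x1))
      (-(β1 • Matrix.diagonal (A.mulVec x1)))
      (-(β2 • Matrix.diagonal (A.mulVec x2)))
      (β2 • (((1 : Matrix (Fin n) (Fin n) ℝ) - Matrix.diagonal x1 - Matrix.diagonal x2) * A)
        - δ2 • (1 : Matrix (Fin n) (Fin n) ℝ) - β2 • Matrix.diagonal (A.mulVec x2))).mulVec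
      (Sum.elim x1 (-x1)) = 0 := by
  set M := ((1 : Matrix (Fin n) (Fin n) ℝ) - diagonal x1 - diagonal x2) * A
  have htop : (β1 • M - δ1 • (1 : Matrix (Fin n) (Fin n) ℝ)) *ᵥ x1 = 0 :=
    smul_sub_smul_one_mulVec_eq_zero he1 (mul_div_cancel₀ δ1 hβ1.ne')
  have hbottom : (β2 • M - δ2 • (1 : Matrix (Fin n) (Fin n) ℝ)) *ᵥ x1 = 0 :=
    smul_sub_smul_one_mulVec_eq_zero he1 (by rw [hratio, mul_div_cancel₀ δ2 hβ2.ne'])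
  rw [fromBlocks_mulVec_sumElim_neg, sub_neg_eq_add, sub_add_cancel, neg_sub_left,
    sub_add_cancel, neg_mulVec, htop, hbottom, neg_zero, Sum.elim_zero_zero]

theorem stmt18 {n : ℕ} (A : Matrix (Fin n) (Fin n) ℝ)
    (hA : ∀ i j, 0 ≤ A i j) (hirr : MatIrred A)
    (δ1 β1 δ2 β2 α : ℝ) (hδ1 : 0 < δ1) (hβ1 : 0 < β1) (hδ2 : 0 < δ2) (hβ2 : 0 < β2)
    (hα : 0 < α) (hratio : δ1 / β1 = δ2 / β2)
    (x1 x2 : Fin n → ℝ) (hpar : x1 = α • x2)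
    (he1 : (((1 : Matrix (Fin n) (Fin n) ℝ) - Matrix.diagonal x1 - Matrix.diagonal x2)
      * A).mulVec x1 = (δ1 / β1) • x1)
    (he2 : (((1 : Matrix (Fin n) (Fin n) ℝ) - Matrix.diagonal x1 - Matrix.diagonal x2)
      * A).mulVec x2 = (δ2 / β2) • x2) :
    (Matrix.fromBlocks
      (β1 • (((1 : Matrix (Fin n) (Fin n) ℝ) - Matrix.diagonal x1 - Matrix.diagonal x2) * A)
        - δ1 • (1 : Matrix (Fin n) (Fin n) ℝ) - β1 • Matrix.diagonal (A.mulVec x1))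
      (-(β1 • Matrix.diagonal (A.mulVec x1)))
      (-(β2 • Matrix.diagonal (A.mulVec x2)))
      (β2 • (((1 : Matrix (Fin n) (Fin n) ℝ) - Matrix.diagonal x1 - Matrix.diagonal x2) * A)
        - δ2 • (1 : Matrix (Fin n) (Fin n) ℝ) - β2 • Matrix.diagonal (A.mulVec x2))).mulVec
      (Sum.elim x1 (-x1)) = 0 :=
  stmt18_general A δ1 β1 δ2 β2 hβ1 hβ2 hratio x1 x2 he1
end

section
/- Let D be a nonnegative diagonal matrix and B an irreducible nonnegative matrix with s(−D+B) > 0, and let x* ≫ 0 be the epidemic equilibrium of ẋ = (−D + B − diag(x)B)x. Define V(y) = max_k |y_k|/x*_k for y = x − x*. Then for any x ∈ (0,1]^n with x ≠ x*, at any index m achieving the maximum, the one-sided derivative of |y_m|/x*_m along the flow is at most −(1/x*_m)(Σ_j β_{mj} x_j)|y_m| ≤ 0; i.e., V is nonincreasing along trajectories and strictly decreasing when x ≫ 0, x ≠ x*. -/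
open Matrix

/-!
Write `y = x - x*` and `V = |y_m| / x*_m`. Using the equilibrium relation
`δ_m x*_m = (1 - x*_m) Σ_j β_mj x*_j`, the `m`-th component of the vector field becomes
`-δ_m y_m + (1 - x*_m) Σ_j β_mj y_j - (Σ_j β_mj x_j) y_m`. Multiplying by `sgn y_m`, the first
term is `-δ_m |y_m|`, and since `|y_j| ≤ V x*_j` for every `j` the coupling term is at most
`(1 - x*_m) V Σ_j β_mj x*_j = δ_m |y_m|`; the two cancel, leaving `-(Σ_j β_mj x_j) |y_m|`.
-/

noncomputable def epidemicField {ι : Type*} [Fintype ι] (δ : ι → ℝ) (B : Matrix ι ι ℝ)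
    (x : ι → ℝ) (i : ι) : ℝ :=
  -δ i * x i + (1 - x i) * ∑ j, B i j * x j

theorem mulVec_self_eq_epidemicField {ι : Type*} [Fintype ι] [DecidableEq ι] (δ : ι → ℝ)
    (B : Matrix ι ι ℝ) (x : ι → ℝ) :
    (-(diagonal δ) + B - diagonal x * B) *ᵥ x = epidemicField δ B x := by
  ext i
  rw [sub_mulVec, add_mulVec, neg_mulVec, ← mulVec_mulVec]
  simp only [Pi.sub_apply, Pi.add_apply, Pi.neg_apply, mulVec_diagonal]
  simp only [epidemicField, mulVec, dotProduct]
  ring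

theorem epidemicField_eq_of_eq_zero {ι : Type*} [Fintype ι] {δ : ι → ℝ} {B : Matrix ι ι ℝ}
    {xs : ι → ℝ} {m : ι} (heq : epidemicField δ B xs m = 0) (x : ι → ℝ) :
    epidemicField δ B x m = -δ m * (x m - xs m) + (1 - xs m) * ∑ j, B m j * (x j - xs j)
      - (∑ j, B m j * x j) * (x m - xs m) := by
  simp only [epidemicField, mul_sub, Finset.sum_sub_distrib] at heq ⊢
  linear_combination heq

theorem abs_sum_mul_le_of_abs_le_mul {ι : Type*} [Fintype ι] {b y w : ι → ℝ} {V : ℝ}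
    (hb : ∀ j, 0 ≤ b j) (hy : ∀ j, |y j| ≤ V * w j) :
    |∑ j, b j * y j| ≤ V * ∑ j, b j * w j :=
  calc |∑ j, b j * y j| ≤ ∑ j, |b j * y j| := Finset.abs_sum_le_sum_abs _ _
    _ ≤ ∑ j, b j * (V * w j) := Finset.sum_le_sum fun j _ => by
        rw [abs_mul, abs_of_nonneg (hb j)]
        exact mul_le_mul_of_nonneg_left (hy j) (hb j)
    _ = V * ∑ j, b j * w j := by
        rw [Finset.mul_sum]
        exact Finset.sum_congr rfl fun j _ => by ring

theorem sign_mul_le_abs {α : Type*} [Ring α] [LinearOrder α] [IsStrictOrderedRing α]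
    (y z : α) : (SignType.sign y : α) * z ≤ |z| := by
  rcases lt_trichotomy y 0 with hy | rfl | hy
  · simpa [sign_neg hy] using neg_le_abs z
  · simp
  · simpa [sign_pos hy] using le_abs_self z

theorem sign_mul_epidemicField_le {ι : Type*} [Fintype ι] {δ : ι → ℝ} {B : Matrix ι ι ℝ}
    {xs x : ι → ℝ} {m : ι} (hB : ∀ j, 0 ≤ B m j) (hxs : ∀ j, 0 < xs j) (hxs_le : xs m ≤ 1)
    (heq : epidemicField δ B xs m = 0)
    (hm : ∀ j, |x j - xs j| / xs j ≤ |x m - xs m| / xs m) :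
    (SignType.sign (x m - xs m) : ℝ) * epidemicField δ B x m
      ≤ -(∑ j, B m j * x j) * |x m - xs m| := by
  set V := |x m - xs m| / xs m
  have hcoupling : |∑ j, B m j * (x j - xs j)| ≤ V * ∑ j, B m j * xs j :=
    abs_sum_mul_le_of_abs_le_mul hB fun j => (div_le_iff₀ (hxs j)).mp (hm j)
  have hequilibrium : (1 - xs m) * (V * ∑ j, B m j * xs j) = δ m * |x m - xs m| := by
    have h : (1 - xs m) * ∑ j, B m j * xs j = δ m * xs m := by
      simp only [epidemicField] at heq; linarith
    rw [mul_left_comm, h, ← div_mul_cancel₀ |x m - xs m| (hxs m).ne']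
    ring
  have hsign := sign_mul_le_abs (x m - xs m) (∑ j, B m j * (x j - xs j))
  rw [epidemicField_eq_of_eq_zero heq]
  linear_combination mul_le_mul_of_nonneg_left (hsign.trans hcoupling) (sub_nonneg.mpr hxs_le)
    + hequilibrium - (δ m + ∑ j, B m j * x j) * sign_mul_self (x m - xs m)

theorem stmt19_general {n : ℕ} (δ : Fin n → ℝ) (B : Matrix (Fin n) (Fin n) ℝ)
    (hB : ∀ i j, 0 ≤ B i j)
    (xs : Fin n → ℝ) (hxs : ∀ i, 0 < xs i ∧ xs i < 1)
    (heq : (-(Matrix.diagonal δ) + B - Matrix.diagonal xs * B).mulVec xs = 0)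
    (x : ℝ → Fin n → ℝ)
    (hode : ∀ t i, HasDerivAt (fun s => x s i)
      (-δ i * x t i + (1 - x t i) * ∑ j, B i j * x t j) t)
    (t : ℝ)
    (m : Fin n) (hm : ∀ j, |x t j - xs j| / xs j ≤ |x t m - xs m| / xs m)
    (hym : x t m ≠ xs m) :
    ∃ d, HasDerivAt (fun s => |x s m - xs m| / xs m) d t ∧
      d ≤ -(1 / xs m) * (∑ j, B m j * x t j) * |x t m - xs m| := by
  have hderiv := ((hasDerivAt_abs (sub_ne_zero.mpr hym)).comp t
    ((hode t m).sub_const (xs m))).div_const (xs m)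
  refine ⟨_, hderiv, ?_⟩
  have hequilibrium : epidemicField δ B xs m = 0 := by
    rw [← mulVec_self_eq_epidemicField, heq, Pi.zero_apply]
  have hbound := sign_mul_epidemicField_le (hB m) (fun j => (hxs j).1) (hxs m).2.le
    hequilibrium hm
  rw [div_le_iff₀ (hxs m).1]
  calc _ ≤ -(∑ j, B m j * x t j) * |x t m - xs m| := hbound
    _ = _ := by field_simp [(hxs m).1.ne']

theorem stmt19 {n : ℕ} (δ : Fin n → ℝ) (B : Matrix (Fin n) (Fin n) ℝ)
    (hδ : ∀ i, 0 ≤ δ i) (hB : ∀ i j, 0 ≤ B i j) (hirr : MatIrred B)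
    (hs : 0 < specAbs (-(Matrix.diagonal δ) + B))
    (xs : Fin n → ℝ) (hxs : ∀ i, 0 < xs i ∧ xs i < 1)
    (heq : (-(Matrix.diagonal δ) + B - Matrix.diagonal xs * B).mulVec xs = 0)
    (x : ℝ → Fin n → ℝ)
    (hode : ∀ t i, HasDerivAt (fun s => x s i)
      (-δ i * x t i + (1 - x t i) * ∑ j, B i j * x t j) t)
    (t : ℝ) (hxt : ∀ i, 0 < x t i ∧ x t i ≤ 1) (hne : x t ≠ xs)
    (m : Fin n) (hm : ∀ j, |x t j - xs j| / xs j ≤ |x t m - xs m| / xs m)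
    (hym : x t m ≠ xs m) :
    ∃ d, HasDerivAt (fun s => |x s m - xs m| / xs m) d t ∧
      d ≤ -(1 / xs m) * (∑ j, B m j * x t j) * |x t m - xs m| :=
  stmt19_general δ B hB xs hxs heq x hode t m hm hym
end
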